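/- arXiv:1702.06749 — 5 statements merged into one kernel-verified Lean document; each statement's English description precedes it below -/
import Mathlib

section
/- Let f : ℝ → ℝ be continuously differentiable with f(0) = 0, let ρ ∈ ℝ, and define Q : ℝ → ℝ by Q(v) = sgn(ρ − v)·(f(ρ) − f(v)) − sgn(v)·f(v). Then for every smooth compactly supported test function ψ : ℝ → ℝ, ∫_ℝ Q(v)·ψ′(v) dv = 2·∫_ℝ f′(v)·χ_ρ(v)·ψ(v) dv. -/
open MeasureTheory

/-- The Maxwellian (kinetic) function `χ_ρ`. -/
noncomputable def chi (a : ℝ) (v : ℝ) : ℝ :=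
  if 0 < v ∧ v < a then 1 else if a < v ∧ v < 0 then -1 else 0

/-- Let `f` be continuously differentiable with `f 0 = 0`, `ρ ∈ ℝ`, and let
`Q v = sgn(ρ − v)(f ρ − f v) − sgn(v) f v`. Then for every smooth compactly supported
test function `ψ`, `∫ Q(v) ψ′(v) dv = 2 ∫ f′(v) χ_ρ(v) ψ(v) dv`. -/
theorem integral_entropy_flux_deriv_eq (f : ℝ → ℝ) (hf : ContDiff ℝ 1 f) (hf0 : f 0 = 0)
    (ρ : ℝ) (Q : ℝ → ℝ)
    (hQ : ∀ v, Q v = Real.sign (ρ - v) * (f ρ - f v) - Real.sign v * f v)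
    (ψ : ℝ → ℝ) (hψ : ContDiff ℝ (⊤ : ℕ∞) ψ) (hsupp : HasCompactSupport ψ) :
    ∫ v : ℝ, Q v * deriv ψ v = 2 * ∫ v : ℝ, deriv f v * chi ρ v * ψ v := by
  have hfd : Differentiable ℝ f := hf.differentiable one_ne_zero
  have hf'c : Continuous (deriv f) := hf.continuous_deriv le_rfl
  have hψd : Differentiable ℝ ψ := hψ.differentiable (by simp)
  have hψ'c : Continuous (deriv ψ) := hψ.continuous_deriv (by simp)
  obtain ⟨R, hR⟩ := hsupp.isBounded.subset_closedBall 0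
  set M : ℝ := |R| + |ρ| + 1 with hMdef
  have hρM : |ρ| < M := by
    have := abs_nonneg R; simp only [hMdef]; linarith
  have hρ1 : -M < ρ := by cases abs_lt.mp hρM; linarith
  have hρ2 : ρ < M := (le_abs_self ρ).trans_lt hρM
  have hM0 : 0 < M := by have := abs_nonneg R; have := abs_nonneg ρ; simp only [hMdef]; linarith
  have hts : ∀ v : ℝ, M ≤ |v| → v ∉ tsupport ψ := by
    intro v hv hmem
    have h1 := hR hmem
    rw [Metric.mem_closedBall, Real.dist_eq, sub_zero] at h1
    have h2 : |v| ≤ |R| := h1.trans (le_abs_self R)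
    have := abs_nonneg ρ
    simp only [hMdef] at hv; linarith
  have hψz : ∀ v : ℝ, M ≤ |v| → ψ v = 0 := fun v hv =>
    image_eq_zero_of_notMem_tsupport (hts v hv)
  have hψ'z : ∀ v : ℝ, M ≤ |v| → deriv ψ v = 0 := by
    intro v hv
    by_contra h
    exact hts v hv (support_deriv_subset (Function.mem_support.2 h))
  have hψa : ψ (-M) = 0 := hψz _ (by rw [abs_neg, abs_of_pos hM0]
  )
  have hψb : ψ M = 0 := hψz _ (by rw [abs_of_pos hM0])
  have hLHS : (∫ v : ℝ, Q v * deriv ψ v) = ∫ v in (-M)..M, Q v * deriv ψ v := by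
    rw [intervalIntegral.integral_of_le (by linarith)]
    rw [setIntegral_eq_integral_of_forall_compl_eq_zero]
    intro v hv
    have hMv : M ≤ |v| := by
      simp only [Set.mem_Ioc, not_and_or, not_lt, not_le] at hv
      rcases hv with h | h
      · rw [abs_of_nonpos (by linarith)]; linarith
      · rw [abs_of_pos (by linarith)]; linarith
    rw [hψ'z v hMv, mul_zero]
  have congr_int : ∀ {g : ℝ → ℝ} {a b : ℝ}, Continuous g →
      Set.EqOn (fun v => Q v * deriv ψ v) g (Set.uIcc a b) →
      IntervalIntegrable (fun v => Q v * deriv ψ v) volume a b := by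
    intro g a b hg he
    exact (hg.intervalIntegrable a b).congr_ae
      ((ae_restrict_mem measurableSet_uIoc).mono
        fun v hv => (he (Set.uIoc_subset_uIcc hv)).symm)
  rcases le_total 0 ρ with hρ | hρ
  · -- case 0 ≤ ρ
    have e1 : Set.EqOn (fun v => Q v * deriv ψ v) (fun v => f ρ * deriv ψ v)
        (Set.uIcc (-M) 0) := by
      intro v hv
      rw [Set.uIcc_of_le (by linarith)] at hv
      obtain ⟨_, hv0⟩ := hv
      simp only [hQ]
      rcases lt_or_eq_of_le hv0 with h | h
      · rw [Real.sign_of_pos (by linarith : (0:ℝ) < ρ - v), Real.sign_of_neg h]; ring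
      · subst h
        rcases lt_or_eq_of_le hρ with h | h
        · rw [sub_zero, Real.sign_of_pos h, Real.sign_zero, hf0]; ring
        · rw [← h, hf0]; simp
    have e2 : Set.EqOn (fun v => Q v * deriv ψ v) (fun v => (f ρ - 2 * f v) * deriv ψ v)
        (Set.uIcc 0 ρ) := by
      intro v hv
      rw [Set.uIcc_of_le hρ] at hv
      obtain ⟨h0, h1⟩ := hv
      simp only [hQ]
      rcases lt_or_eq_of_le h0 with h0 | h0
      · rcases lt_or_eq_of_le h1 with h1 | h1
        · rw [Real.sign_of_pos (by linarith : (0:ℝ) < ρ - v), Real.sign_of_pos h0]; ring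
        · subst h1
          rw [sub_self, Real.sign_zero, Real.sign_of_pos h0]; ring
      · subst h0
        rcases lt_or_eq_of_le hρ with h | h
        · rw [sub_zero, Real.sign_of_pos h, Real.sign_zero, hf0]; ring
        · rw [← h, hf0]; simp
    have e3 : Set.EqOn (fun v => Q v * deriv ψ v) (fun v => (-f ρ) * deriv ψ v)
        (Set.uIcc ρ M) := by
      intro v hv
      rw [Set.uIcc_of_le (by linarith)] at hv
      obtain ⟨h0, _⟩ := hv
      simp only [hQ]
      rcases lt_or_eq_of_le h0 with h | h
      · rw [Real.sign_of_neg (by linarith : ρ - v < 0),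
          Real.sign_of_pos (lt_of_le_of_lt hρ h)]; ring
      · subst h
        rcases lt_or_eq_of_le hρ with h | h
        · rw [sub_self, Real.sign_zero, Real.sign_of_pos h]; ring
        · rw [← h, hf0]; simp
    have i1 := congr_int (continuous_const.mul hψ'c) e1
    have i2 := congr_int ((continuous_const.sub (continuous_const.mul hfd.continuous)).mul hψ'c) e2
    have i3 := congr_int (continuous_const.mul hψ'c) e3
    have hsplit : (∫ v in (-M)..M, Q v * deriv ψ v)
        = (∫ v in (-M)..(0:ℝ), Q v * deriv ψ v) + ((∫ v in (0:ℝ)..ρ, Q v * deriv ψ v)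
          + (∫ v in ρ..M, Q v * deriv ψ v)) := by
      rw [intervalIntegral.integral_add_adjacent_intervals i2 i3,
        intervalIntegral.integral_add_adjacent_intervals i1 (i2.trans i3)]
    have p1 : (∫ v in (-M)..(0:ℝ), Q v * deriv ψ v) = f ρ * ψ 0 := by
      rw [intervalIntegral.integral_congr e1, intervalIntegral.integral_const_mul,
        intervalIntegral.integral_deriv_eq_sub (fun x _ => hψd x) (hψ'c.intervalIntegrable _ _),
        hψa, sub_zero]
    have p3 : (∫ v in ρ..M, Q v * deriv ψ v) = f ρ * ψ ρ := by
      rw [intervalIntegral.integral_congr e3, intervalIntegral.integral_const_mul,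
        intervalIntegral.integral_deriv_eq_sub (fun x _ => hψd x) (hψ'c.intervalIntegrable _ _),
        hψb]
      ring
    have p2 : (∫ v in (0:ℝ)..ρ, Q v * deriv ψ v)
        = -(f ρ * ψ ρ) - f ρ * ψ 0 + 2 * ∫ v in (0:ℝ)..ρ, deriv f v * ψ v := by
      rw [intervalIntegral.integral_congr e2]
      rw [intervalIntegral.integral_mul_deriv_eq_deriv_mul
        (u' := fun v => -(2 * deriv f v)) (v' := deriv ψ)
        (fun x _ => ((hfd x).hasDerivAt.const_mul 2).const_sub (f ρ))
        (fun x _ => (hψd x).hasDerivAt)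
        ((continuous_const.mul hf'c).neg.intervalIntegrable _ _)
        (hψ'c.intervalIntegrable _ _)]
      have : (fun v => -(2 * deriv f v) * ψ v) = fun v => (-2) * (deriv f v * ψ v) := by
        funext v; ring
      rw [this, intervalIntegral.integral_const_mul, hf0]
      ring
    have hRHS : (∫ v : ℝ, deriv f v * chi ρ v * ψ v) = ∫ v in (0:ℝ)..ρ, deriv f v * ψ v := by
      have hind : (fun v => deriv f v * chi ρ v * ψ v)
          = (Set.Ioo (0:ℝ) ρ).indicator (fun v => deriv f v * ψ v) := by
        funext v
        by_cases h : v ∈ Set.Ioo (0:ℝ) ρ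
        · rw [Set.indicator_of_mem h, chi, if_pos ⟨h.1, h.2⟩]; ring
        · rw [Set.indicator_of_notMem h, chi,
            if_neg (by simpa [Set.mem_Ioo] using h),
            if_neg (by rintro ⟨h1, h2⟩; linarith)]
          ring
      rw [hind, integral_indicator measurableSet_Ioo, ← integral_Ioc_eq_integral_Ioo,
        ← intervalIntegral.integral_of_le hρ]
    rw [hLHS, hsplit, p1, p2, p3, hRHS]
    ring
  · -- case ρ ≤ 0
    have e1 : Set.EqOn (fun v => Q v * deriv ψ v) (fun v => f ρ * deriv ψ v)
        (Set.uIcc (-M) ρ) := by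
      intro v hv
      rw [Set.uIcc_of_le (by linarith)] at hv
      obtain ⟨_, hv0⟩ := hv
      simp only [hQ]
      rcases lt_or_eq_of_le hv0 with h | h
      · rw [Real.sign_of_pos (by linarith : (0:ℝ) < ρ - v),
          Real.sign_of_neg (by linarith : v < 0)]; ring
      · subst h
        rcases lt_or_eq_of_le hρ with h | h
        · rw [sub_self, Real.sign_zero, Real.sign_of_neg h]; ring
        · rw [h, hf0]; simp
    have e2 : Set.EqOn (fun v => Q v * deriv ψ v) (fun v => (2 * f v - f ρ) * deriv ψ v)
        (Set.uIcc ρ 0) := by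
      intro v hv
      rw [Set.uIcc_of_le hρ] at hv
      obtain ⟨h0, h1⟩ := hv
      simp only [hQ]
      rcases lt_or_eq_of_le h1 with h1 | h1
      · rcases lt_or_eq_of_le h0 with h0 | h0
        · rw [Real.sign_of_neg (by linarith : ρ - v < 0), Real.sign_of_neg h1]; ring
        · subst h0
          rw [sub_self, Real.sign_zero, Real.sign_of_neg h1]; ring
      · subst h1
        rcases lt_or_eq_of_le hρ with h' | h'
        · rw [sub_zero, Real.sign_of_neg h', Real.sign_zero, hf0]; ring
        · rw [h', hf0]; simp
    have e3 : Set.EqOn (fun v => Q v * deriv ψ v) (fun v => (-f ρ) * deriv ψ v)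
        (Set.uIcc 0 M) := by
      intro v hv
      rw [Set.uIcc_of_le (by linarith)] at hv
      obtain ⟨h0, _⟩ := hv
      simp only [hQ]
      rcases lt_or_eq_of_le h0 with h | h
      · rw [Real.sign_of_neg (by linarith : ρ - v < 0), Real.sign_of_pos h]; ring
      · subst h
        rcases lt_or_eq_of_le hρ with h' | h'
        · rw [sub_zero, Real.sign_of_neg h', Real.sign_zero, hf0]; ring
        · rw [h', hf0]; simp
    have i1 := congr_int (continuous_const.mul hψ'c) e1
    have i2 := congr_int (((continuous_const.mul hfd.continuous).sub continuous_const).mul hψ'c) e2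
    have i3 := congr_int (continuous_const.mul hψ'c) e3
    have hsplit : (∫ v in (-M)..M, Q v * deriv ψ v)
        = (∫ v in (-M)..ρ, Q v * deriv ψ v) + ((∫ v in ρ..(0:ℝ), Q v * deriv ψ v)
          + (∫ v in (0:ℝ)..M, Q v * deriv ψ v)) := by
      rw [intervalIntegral.integral_add_adjacent_intervals i2 i3,
        intervalIntegral.integral_add_adjacent_intervals i1 (i2.trans i3)]
    have p1 : (∫ v in (-M)..ρ, Q v * deriv ψ v) = f ρ * ψ ρ := by
      rw [intervalIntegral.integral_congr e1, intervalIntegral.integral_const_mul,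
        intervalIntegral.integral_deriv_eq_sub (fun x _ => hψd x) (hψ'c.intervalIntegrable _ _),
        hψa, sub_zero]
    have p3 : (∫ v in (0:ℝ)..M, Q v * deriv ψ v) = f ρ * ψ 0 := by
      rw [intervalIntegral.integral_congr e3, intervalIntegral.integral_const_mul,
        intervalIntegral.integral_deriv_eq_sub (fun x _ => hψd x) (hψ'c.intervalIntegrable _ _),
        hψb]
      ring
    have p2 : (∫ v in ρ..(0:ℝ), Q v * deriv ψ v)
        = -(f ρ * ψ 0) - f ρ * ψ ρ - 2 * ∫ v in ρ..(0:ℝ), deriv f v * ψ v := by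
      rw [intervalIntegral.integral_congr e2]
      rw [intervalIntegral.integral_mul_deriv_eq_deriv_mul
        (u' := fun v => 2 * deriv f v) (v' := deriv ψ)
        (fun x _ => ((hfd x).hasDerivAt.const_mul 2).sub_const (f ρ))
        (fun x _ => (hψd x).hasDerivAt)
        ((continuous_const.mul hf'c).intervalIntegrable _ _)
        (hψ'c.intervalIntegrable _ _)]
      have : (fun v => (2 * deriv f v) * ψ v) = fun v => (2:ℝ) * (deriv f v * ψ v) := by
        funext v; ring
      rw [this, intervalIntegral.integral_const_mul, hf0]
      ring
    have hRHS : (∫ v : ℝ, deriv f v * chi ρ v * ψ v) = -∫ v in ρ..(0:ℝ), deriv f v * ψ v := by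
      have hind : (fun v => deriv f v * chi ρ v * ψ v)
          = (Set.Ioo ρ (0:ℝ)).indicator (fun v => -(deriv f v * ψ v)) := by
        funext v
        by_cases h : v ∈ Set.Ioo ρ (0:ℝ)
        · rw [Set.indicator_of_mem h, chi, if_neg (by rintro ⟨h1, h2⟩; linarith),
            if_pos ⟨h.1, h.2⟩]
          ring
        · rw [Set.indicator_of_notMem h, chi,
            if_neg (by rintro ⟨h1, h2⟩; linarith),
            if_neg (by simpa [Set.mem_Ioo] using h)]
          ring
      rw [hind, integral_indicator measurableSet_Ioo, ← integral_Ioc_eq_integral_Ioo,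
        ← intervalIntegral.integral_of_le hρ, intervalIntegral.integral_neg]
    rw [hLHS, hsplit, p1, p2, p3, hRHS]
    ring
end

section
/- Let f : ℝ → ℝ be continuously differentiable and let ρ, r̄ ∈ ℝ. Then ∫_ℝ f′(v)·sgn(v − r̄)·χ_ρ(v) dv = sgn(ρ − r̄)·(f(ρ) − f(r̄)) − sgn(r̄)·(f(r̄) − f(0)). -/
/-!
For any `c`, the function `v ↦ sgn(v - c) (f v - f c)` is continuous (it vanishes at `c`) and
is a primitive of `f' v · sgn(v - c)` away from `c`, so the fundamental theorem of calculus
with a countable exceptional set evaluates `∫_a^b f' · sgn(· - c)`. Multiplying by `χ_ρ` turns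
an integral over `ℝ` into the oriented integral `∫_0^ρ`; take `a = 0`, `b = ρ`, `c = r̄`.
-/

open MeasureTheory

open Filter Topology Set

theorem Real.monotone_sign : Monotone Real.sign := by
  intro x y hxy
  simp only [Real.sign]
  split_ifs <;> linarith

theorem Real.abs_sign_le_one (r : ℝ) : |Real.sign r| ≤ 1 := by
  rcases Real.sign_apply_eq r with h | h | h <;> simp [h]

theorem Real.sign_sub_eventuallyEq {x c : ℝ} (hx : x ≠ c) :
    (fun y => Real.sign (y - c)) =ᶠ[𝓝 x] fun _ => Real.sign (x - c) := by
  rcases hx.lt_or_gt with hx | hx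
  · filter_upwards [Iio_mem_nhds hx] with y hy
    rw [Real.sign_of_neg (sub_neg.2 hy), Real.sign_of_neg (sub_neg.2 hx)]
  · filter_upwards [Ioi_mem_nhds hx] with y hy
    rw [Real.sign_of_pos (sub_pos.2 hy), Real.sign_of_pos (sub_pos.2 hx)]

theorem chi_of_nonneg {ρ : ℝ} (hρ : 0 ≤ ρ) : chi ρ = (Ioo 0 ρ).indicator 1 := by
  ext v
  simp only [chi, indicator, mem_Ioo, Pi.one_apply]
  grind

theorem chi_of_nonpos {ρ : ℝ} (hρ : ρ ≤ 0) : chi ρ = -(Ioo ρ 0).indicator 1 := by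
  ext v
  simp only [chi, indicator, mem_Ioo, Pi.one_apply, Pi.neg_apply]
  grind

theorem integral_mul_chi (g : ℝ → ℝ) (ρ : ℝ) :
    ∫ v, g v * chi ρ v = ∫ v in 0..ρ, g v := by
  rcases le_total 0 ρ with hρ | hρ
  · simp_rw [chi_of_nonneg hρ, ← indicator_mul_right, Pi.one_apply, mul_one]
    rw [integral_indicator measurableSet_Ioo, intervalIntegral.integral_of_le hρ,
      integral_Ioc_eq_integral_Ioo]
  · simp_rw [chi_of_nonpos hρ, Pi.neg_apply, mul_neg, ← indicator_mul_right, Pi.one_apply,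
      mul_one]
    rw [integral_neg, integral_indicator measurableSet_Ioo, intervalIntegral.integral_of_ge hρ,
      integral_Ioc_eq_integral_Ioo]

section
variable {f : ℝ → ℝ}

theorem continuous_sign_sub_mul_sub (hf : Continuous f) (c : ℝ) :
    Continuous fun x => Real.sign (x - c) * (f x - f c) := by
  refine continuous_iff_continuousAt.2 fun x => ?_
  rcases eq_or_ne x c with rfl | hx
  · have hf0 : Tendsto (fun y => f y - f x) (𝓝 x) (𝓝 0) := by
      simpa using (hf.tendsto x).sub_const (f x)
    have hsq : Tendsto (fun y => Real.sign (y - x) * (f y - f x)) (𝓝 x) (𝓝 0) :=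
      squeeze_zero_norm (fun y => by
        simpa [abs_mul] using mul_le_of_le_one_left (abs_nonneg _) (Real.abs_sign_le_one (y - x)))
        (by simpa using hf0.abs)
    simpa [ContinuousAt] using hsq
  · exact (continuousAt_const.congr (Real.sign_sub_eventuallyEq hx).symm).mul
      (hf.continuousAt.sub continuousAt_const)

theorem HasDerivAt.sign_sub_mul_sub {f' x c : ℝ} (hf : HasDerivAt f f' x) (hx : x ≠ c) :
    HasDerivAt (fun y => Real.sign (y - c) * (f y - f c)) (f' * Real.sign (x - c)) x := by
  rw [mul_comm]
  refine ((hf.sub_const (f c)).const_mul _).congr_of_eventuallyEq ?_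
  filter_upwards [Real.sign_sub_eventuallyEq hx] with y hy
  rw [hy]

theorem IntervalIntegrable.mul_sign_sub {g : ℝ → ℝ} {a b : ℝ}
    (hg : IntervalIntegrable g volume a b) (c : ℝ) :
    IntervalIntegrable (fun v => g v * Real.sign (v - c)) volume a b := by
  rw [intervalIntegrable_iff] at *
  exact hg.mul_bdd
    (Real.monotone_sign.measurable.comp (measurable_sub_const c)).aestronglyMeasurable
    (Eventually.of_forall fun v => Real.abs_sign_le_one _)

theorem integral_mul_sign_sub_of_hasDerivAt {f' : ℝ → ℝ} (hf : ∀ x, HasDerivAt f (f' x) x)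
    {a b : ℝ} (hf' : IntervalIntegrable f' volume a b) (c : ℝ) :
    ∫ v in a..b, f' v * Real.sign (v - c)
      = Real.sign (b - c) * (f b - f c) - Real.sign (a - c) * (f a - f c) := by
  have hcont : Continuous f := continuous_iff_continuousAt.2 fun x => (hf x).continuousAt
  exact integral_eq_of_hasDerivAt_off_countable _ _ (countable_singleton c)
    (continuous_sign_sub_mul_sub hcont c).continuousOn
    (fun x hx => (hf x).sign_sub_mul_sub hx.2) (hf'.mul_sign_sub c)

end

/-- Let `f` be continuously differentiable and `ρ, r̄ ∈ ℝ`. Then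
`∫ f′(v) sgn(v − r̄) χ_ρ(v) dv = sgn(ρ − r̄)(f ρ − f r̄) − sgn(r̄)(f r̄ − f 0)`. -/
theorem integral_deriv_sign_chi (f : ℝ → ℝ) (hf : ContDiff ℝ 1 f) (ρ rbar : ℝ) :
    ∫ v : ℝ, deriv f v * Real.sign (v - rbar) * chi ρ v
      = Real.sign (ρ - rbar) * (f ρ - f rbar) - Real.sign rbar * (f rbar - f 0) := by
  have hderiv : ∀ x, HasDerivAt f (deriv f x) x := fun x =>
    ((hf.differentiable one_ne_zero) x).hasDerivAt
  rw [integral_mul_chi, integral_mul_sign_sub_of_hasDerivAt hderiv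
    ((hf.continuous_deriv le_rfl).intervalIntegrable 0 ρ) rbar, zero_sub, Real.sign_neg]
  ring
end

section
/- Let ε > 0, T > 0, and let U : [0, T] → ℝ be bounded and satisfy, for every t ∈ [0, T], U(t) ≤ (1 − e^{−t/ε})·sup_{s ∈ [0, t]} U(s) + e^{−t/ε}·U(0). Then U(t) ≤ U(0) for every t ∈ [0, T]. -/
open Set

/-! If `S := sup U` on `[0, T]` exceeded `U 0`, the hypothesis would give
`U t ≤ S - e^{-t/ε} (S - U 0) ≤ S - e^{-T/ε} (S - U 0)` for all `t`,
a bound strictly below `S`. -/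

theorem csSup_image_le_of_le_one_sub_mul_add_mul {α : Type*} {s : Set α} {f θ : α → ℝ}
    {c δ : ℝ}
    (hne : s.Nonempty) (hδ : 0 < δ) (hθ : ∀ t ∈ s, δ ≤ θ t)
    (h : ∀ t ∈ s, f t ≤ (1 - θ t) * sSup (f '' s) + θ t * c) :
    sSup (f '' s) ≤ c := by
  set S := sSup (f '' s)
  by_contra! hcS
  have hgap : ∀ t ∈ s, f t ≤ S - δ * (S - c) := fun t ht => by
    nlinarith [h t ht, hθ t ht]
  have : S ≤ S - δ * (S - c) := csSup_le (hne.image f) (forall_mem_image.2 hgap)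
  nlinarith

theorem iteration_lemma_general (ε T : ℝ) (hε : 0 < ε) (U : ℝ → ℝ)
    (hbdd : ∃ M : ℝ, ∀ t ∈ Icc (0 : ℝ) T, |U t| ≤ M)
    (hineq : ∀ t ∈ Icc (0 : ℝ) T,
      U t ≤ (1 - Real.exp (-t / ε)) * sSup (U '' Icc (0 : ℝ) t) + Real.exp (-t / ε) * U 0) :
    ∀ t ∈ Icc (0 : ℝ) T, U t ≤ U 0 := by
  intro t ht
  obtain ⟨M, hM⟩ := hbdd
  have hUbdd : BddAbove (U '' Icc 0 T) :=
    ⟨M, forall_mem_image.2 fun x hx => (le_abs_self _).trans (hM x hx)⟩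
  suffices hsup : sSup (U '' Icc 0 T) ≤ U 0 from (le_csSup hUbdd ⟨t, ht, rfl⟩).trans hsup
  refine csSup_image_le_of_le_one_sub_mul_add_mul ⟨t, ht⟩ (Real.exp_pos (-T / ε))
    (fun x hx => Real.exp_le_exp.2 (div_le_div_of_nonneg_right (neg_le_neg hx.2) hε.le))
    fun x hx => (hineq x hx).trans ?_
  have hweight : 0 ≤ 1 - Real.exp (-x / ε) :=
    sub_nonneg.2 <| Real.exp_le_one_iff.2 <|
      div_nonpos_of_nonpos_of_nonneg (neg_nonpos.2 hx.1) hε.le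
  have hsup_mono : sSup (U '' Icc 0 x) ≤ sSup (U '' Icc 0 T) :=
    csSup_le_csSup hUbdd ⟨U 0, 0, left_mem_Icc.2 hx.1, rfl⟩
      (image_mono (Icc_subset_Icc_right hx.2))
  gcongr

/-- Let `ε > 0`, `T > 0`, and let `U : [0, T] → ℝ` be bounded and satisfy
`U t ≤ (1 − e^{−t/ε}) sup_{s ∈ [0,t]} U s + e^{−t/ε} U 0` for every `t ∈ [0, T]`.
Then `U t ≤ U 0` for every `t ∈ [0, T]`. -/
theorem iteration_lemma (ε T : ℝ) (hε : 0 < ε) (hT : 0 < T) (U : ℝ → ℝ)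
    (hbdd : ∃ M : ℝ, ∀ t ∈ Icc (0 : ℝ) T, |U t| ≤ M)
    (hineq : ∀ t ∈ Icc (0 : ℝ) T,
      U t ≤ (1 - Real.exp (-t / ε)) * sSup (U '' Icc (0 : ℝ) t) + Real.exp (-t / ε) * U 0) :
    ∀ t ∈ Icc (0 : ℝ) T, U t ≤ U 0 :=
  iteration_lemma_general ε T hε U hbdd hineq
end

section
/- Let u : ℝ → ℝ be Lebesgue integrable with u(v) ∈ [0, 1] for all v > 0 and u(v) ∈ [−1, 0] for all v < 0. Set ρ = ∫_ℝ u(v) dv and define m : ℝ → ℝ by m(v) = ∫_{−∞}^v (χ_ρ(r) − u(r)) dr. Then m(v) ≥ 0 for every v ∈ ℝ, and m(v) → 0 as v → −∞ and as v → +∞. -/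
/-!
The derivative of `m` is `χ_ρ - u`, which away from `0` is nonnegative to the left of `ρ` and
nonpositive to the right of it, while `m` vanishes at `-∞` and, since `∫ χ_ρ = ρ = ∫ u`, also at
`+∞`. So `m` increases from `0` and then decreases back to `0`.
-/

open MeasureTheory Filter Set

lemma chi_eq_indicator_sub_indicator (a : ℝ) :
    chi a = (Ioo 0 a).indicator 1 - (Ioo a 0).indicator 1 := by
  ext v
  simp only [chi, Pi.sub_apply, indicator, mem_Ioo, Pi.one_apply]
  split_ifs <;> grind

lemma integrable_indicator_one_Ioo (a b : ℝ) : Integrable ((Ioo a b).indicator (1 : ℝ → ℝ)) :=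
  (integrable_indicator_iff measurableSet_Ioo).2 (integrableOn_const measure_Ioo_lt_top.ne)

lemma integrable_chi (a : ℝ) : Integrable (chi a) := by
  rw [chi_eq_indicator_sub_indicator]
  exact (integrable_indicator_one_Ioo 0 a).sub (integrable_indicator_one_Ioo a 0)

lemma integral_chi (a : ℝ) : ∫ v, chi a v = a := by
  rw [chi_eq_indicator_sub_indicator, integral_sub' (integrable_indicator_one_Ioo 0 a)
    (integrable_indicator_one_Ioo a 0), integral_indicator_one measurableSet_Ioo,
    integral_indicator_one measurableSet_Ioo, Real.volume_real_Ioo, Real.volume_real_Ioo]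
  rcases le_total 0 a with h | h <;> simp [h]

lemma chi_sub_nonneg {u : ℝ → ℝ} (hpos : ∀ v, 0 < v → u v ≤ 1) (hneg : ∀ v, v < 0 → u v ≤ 0)
    {ρ r : ℝ} (hr0 : r ≠ 0) (hr : r < ρ) : 0 ≤ chi ρ r - u r := by
  grind [chi]

lemma chi_sub_nonpos {u : ℝ → ℝ} (hpos : ∀ v, 0 < v → 0 ≤ u v) (hneg : ∀ v, v < 0 → -1 ≤ u v)
    {ρ r : ℝ} (hr0 : r ≠ 0) (hr : ρ < r) : chi ρ r - u r ≤ 0 := by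
  grind [chi]

lemma setIntegral_Iic_nonneg_of_sign_change {μ : Measure ℝ} {g : ℝ → ℝ} (hg : Integrable g μ)
    (h0 : ∫ x, g x ∂μ = 0) {a : ℝ} (hlt : ∀ᵐ x ∂μ, x < a → 0 ≤ g x)
    (hgt : ∀ᵐ x ∂μ, a < x → g x ≤ 0) (v : ℝ) : 0 ≤ ∫ x in Iic v, g x ∂μ := by
  rcases lt_or_ge v a with hv | hv
  · exact setIntegral_nonneg_ae measurableSet_Iic (hlt.mono fun x hx hxv => hx (hxv.trans_lt hv))
  · have hsplit := intervalIntegral.integral_Iic_add_Ioi (b := v) hg.integrableOn hg.integrableOn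
    have hright : ∫ x in Ioi v, g x ∂μ ≤ 0 :=
      setIntegral_nonpos_ae measurableSet_Ioi (hgt.mono fun x hx hvx => hx (hv.trans_lt hvx))
    linarith

/-- Let `u : ℝ → ℝ` be integrable with `u v ∈ [0,1]` for `v > 0` and `u v ∈ [−1,0]`
for `v < 0`. Set `ρ = ∫ u` and `m v = ∫_{−∞}^v (χ_ρ(r) − u r) dr`. Then `m v ≥ 0` for
every `v`, and `m v → 0` as `v → −∞` and as `v → +∞`. -/
theorem defect_measure_nonneg (u : ℝ → ℝ) (hu : Integrable u)
    (hpos : ∀ v : ℝ, 0 < v → u v ∈ Icc (0 : ℝ) 1)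
    (hneg : ∀ v : ℝ, v < 0 → u v ∈ Icc (-1 : ℝ) 0)
    (ρ : ℝ) (hρ : ρ = ∫ v : ℝ, u v)
    (m : ℝ → ℝ) (hm : ∀ v : ℝ, m v = ∫ r in Iic v, (chi ρ r - u r)) :
    (∀ v : ℝ, 0 ≤ m v) ∧
    Tendsto m atBot (nhds 0) ∧ Tendsto m atTop (nhds 0) := by
  obtain rfl : m = fun v => ∫ r in Iic v, (chi ρ r - u r) := funext hm
  have hg : Integrable fun r => chi ρ r - u r := (integrable_chi ρ).sub hu
  have hg0 : ∫ r, (chi ρ r - u r) = 0 := by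
    rw [integral_sub (integrable_chi ρ) hu, integral_chi, hρ, sub_self]
  refine ⟨setIntegral_Iic_nonneg_of_sign_change hg hg0 (a := ρ) ?_ ?_,
    tendsto_integral_Iic_zero tendsto_id, ?_⟩
  · filter_upwards [Measure.ae_ne volume 0] with r hr0 hr
    exact chi_sub_nonneg (fun v hv => (hpos v hv).2) (fun v hv => (hneg v hv).2) hr0 hr
  · filter_upwards [Measure.ae_ne volume 0] with r hr0 hr
    exact chi_sub_nonpos (fun v hv => (hpos v hv).1) (fun v hv => (hneg v hv).1) hr0 hr
  · rw [← hg0]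
    exact (aecover_Iic tendsto_id).integral_tendsto_of_countably_generated hg
end

section
/- Let c ≥ 0 and y > 0. Define g : [0, ∞) → [0, ∞) by g(y) = y²·e^{y²}, let g⁻¹ denote its inverse (g is a strictly increasing bijection of [0, ∞) onto itself), and set Y(t) = g⁻¹(g(y)·e^{2ct}) for t ≥ 0. Then Y(0) = y and, for every t ≥ 0, Y is differentiable at t with derivative Y′(t) = c·Y(t)/(1 + Y(t)²). -/
/-! Along `Y` we have `g (Y t) = g y · e^{2ct}`, so differentiating gives `g' (Y) · Y' = 2 c · g (Y)`,
and `g' z / g z = 2 (1 + z²) / z`. The inverse function theorem applies to `ginv` at every point of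
`(0, ∞)`: there `g' > 0`, and `ginv` is continuous because it is monotone with an interval as image. -/

open Set Filter Topology

theorem HasDerivAt.of_invOn_of_monotoneOn {f finv : ℝ → ℝ} {s t : Set ℝ}
    (hmono : MonotoneOn f s) (hbij : BijOn f s t) (hinv : InvOn finv f s t) {a f' : ℝ}
    (ht : t ∈ 𝓝 a) (hs : s ∈ 𝓝 (finv a)) (hf : HasDerivAt f f' (finv a)) (hf' : f' ≠ 0) :
    HasDerivAt finv f'⁻¹ a := by
  have hbij_inv : BijOn finv t s := hbij.symm hinv.symm
  have hmono_inv : MonotoneOn finv t :=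
    Function.monotoneOn_of_rightInvOn_of_mapsTo hmono hinv.2 hbij_inv.mapsTo
  have hcont : ContinuousAt finv a :=
    continuousAt_of_monotoneOn_of_image_mem_nhds hmono_inv ht (hbij_inv.image_eq ▸ hs)
  exact hf.of_local_left_inverse hcont hf' (eventually_of_mem ht fun _ hy => hinv.2 hy)

theorem monotoneOn_sq_mul_exp_sq : MonotoneOn (fun z : ℝ => z ^ 2 * Real.exp (z ^ 2)) (Ici 0) := by
  intro u hu v _ huv
  have hsq : u ^ 2 ≤ v ^ 2 := pow_le_pow_left₀ hu huv 2
  dsimp only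
  gcongr

theorem hasDerivAt_sq_mul_exp_sq (z : ℝ) :
    HasDerivAt (fun w : ℝ => w ^ 2 * Real.exp (w ^ 2))
      (2 * z * (1 + z ^ 2) * Real.exp (z ^ 2)) z := by
  have hsq : HasDerivAt (fun w : ℝ => w ^ 2) (2 * z) z := by
    simpa using hasDerivAt_pow 2 z
  exact (hsq.mul hsq.exp).congr_deriv (by ring)

theorem ode_explicit_solution_general (c y : ℝ) (hy : 0 < y)
    (g ginv : ℝ → ℝ) (hg : ∀ z, g z = z ^ 2 * Real.exp (z ^ 2))
    (hbij : Set.BijOn g (Ici 0) (Ici 0))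
    (hinv : Set.InvOn ginv g (Ici 0) (Ici 0))
    (Y : ℝ → ℝ) (hY : ∀ t, Y t = ginv (g y * Real.exp (2 * c * t))) :
    Y 0 = y ∧
    ∀ t : ℝ, 0 ≤ t → HasDerivAt Y (c * Y t / (1 + Y t ^ 2)) t := by
  obtain rfl : g = fun z => z ^ 2 * Real.exp (z ^ 2) := funext hg
  beta_reduce at hY
  refine ⟨by simpa [hY] using hinv.1 hy.le, fun t _ => ?_⟩
  set a := y ^ 2 * Real.exp (y ^ 2) * Real.exp (2 * c * t)
  have ha : 0 < a := by positivity
  set z := ginv a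
  have hgz : z ^ 2 * Real.exp (z ^ 2) = a := hinv.2 ha.le
  have hz : 0 < z := by
    refine lt_of_le_of_ne ((hbij.symm hinv.symm).mapsTo ha.le) fun hz0 => ?_
    rw [← hz0] at hgz
    simp [← hgz] at ha
  have hginv : HasDerivAt ginv (2 * z * (1 + z ^ 2) * Real.exp (z ^ 2))⁻¹ a :=
    (hasDerivAt_sq_mul_exp_sq z).of_invOn_of_monotoneOn monotoneOn_sq_mul_exp_sq hbij hinv
      (Ici_mem_nhds ha) (Ici_mem_nhds hz) (by positivity)
  have hexp :
      HasDerivAt (fun s => y ^ 2 * Real.exp (y ^ 2) * Real.exp (2 * c * s)) (a * (2 * c)) t := by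
    refine (((hasDerivAt_id t).const_mul (2 * c)).exp.const_mul _).congr_deriv ?_
    simp only [id, mul_one, a]
    ring
  have hYz : Y t = z := hY t
  rw [hYz, show Y = _ from funext hY]
  refine (hginv.comp t hexp).congr_deriv ?_
  rw [← hgz]
  field_simp

/-- Let `c ≥ 0`, `y > 0`, `g y = y² e^{y²}` (a strictly increasing bijection of `[0,∞)`
onto itself) with inverse `ginv`, and set `Y t = ginv (g y · e^{2ct})`. Then `Y 0 = y`
and for every `t ≥ 0`, `Y` is differentiable at `t` with `Y′(t) = c Y(t)/(1 + Y(t)²)`. -/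
theorem ode_explicit_solution (c y : ℝ) (hc : 0 ≤ c) (hy : 0 < y)
    (g ginv : ℝ → ℝ) (hg : ∀ z, g z = z ^ 2 * Real.exp (z ^ 2))
    (hbij : Set.BijOn g (Ici 0) (Ici 0))
    (hinv : Set.InvOn ginv g (Ici 0) (Ici 0))
    (Y : ℝ → ℝ) (hY : ∀ t, Y t = ginv (g y * Real.exp (2 * c * t))) :
    Y 0 = y ∧
    ∀ t : ℝ, 0 ≤ t → HasDerivAt Y (c * Y t / (1 + Y t ^ 2)) t :=
  ode_explicit_solution_general c y hy g ginv hg hbij hinv Y hY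
end
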